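/- Let q be an odd prime, d ≥ 2, and E ⊆ F_q^d with #E ≥ C·q^{(d+1)/2} for a sufficiently large absolute constant C. Then the distance set Δ(E) = {|x−y|² : x,y ∈ E} satisfies #Δ(E) ≥ c·q for an absolute constant c > 0. -/

import Mathlib

/-!
Let `ψ` be a primitive additive character of a finite field `F` of odd characteristic, `q = #F`,
and let `ν(t)` count the pairs `(x, y) ∈ E × E` with `|x - y|² = t`. Cauchy–Schwarz gives
`|E|⁴ ≤ #Δ(E) · ∑ₜ ν(t)²`, and Plancherel on `F` turns `q ∑ₜ ν(t)²` into
`∑ᵤ |∑_{x,y ∈ E} ψ(u |x - y|²)|²`. The term `u = 0` is `|E|⁴`. For `u ≠ 0`, expanding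
`|x - y|² = x·x + y·y - 2 x·y` separates the variables, so Cauchy–Schwarz in `x` followed by
Parseval on `F^d` for the character `x ↦ ψ(-2u x·y)` (primitive since `2u ≠ 0`) bounds the
square of the sum by `|E|² q^d`. Hence `q |E|⁴ ≤ #Δ(E) (|E|⁴ + q^{d+1} |E|²)`, and
`|E|² ≥ 4 q^{d+1}` forces `#Δ(E) ≥ 4q/5`.
-/

open Finset ComplexConjugate AddChar

theorem sum_norm_sq_sum_mul_eq_of_orthogonal {X V : Type*} [Fintype X] [DecidableEq V]
    (e : X → V → ℂ) (N : ℝ)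
    (horth : ∀ v w, ∑ x, e x v * conj (e x w) = if v = w then (N : ℂ) else 0)
    (s : Finset V) (f : V → ℂ) :
    ∑ x, ‖∑ v ∈ s, f v * e x v‖ ^ 2 = N * ∑ v ∈ s, ‖f v‖ ^ 2 := by
  apply Complex.ofReal_injective
  push_cast
  simp_rw [← Complex.mul_conj']
  calc ∑ x, (∑ v ∈ s, f v * e x v) * conj (∑ w ∈ s, f w * e x w)
      = ∑ v ∈ s, ∑ w ∈ s, f v * conj (f w) * ∑ x, e x v * conj (e x w) := by
        simp only [map_sum, map_mul, sum_mul_sum]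
        rw [sum_comm]
        refine sum_congr rfl fun v _ => ?_
        rw [sum_comm]
        refine sum_congr rfl fun w _ => ?_
        rw [mul_sum]
        exact sum_congr rfl fun x _ => by ring
    _ = N * ∑ v ∈ s, f v * conj (f v) := by
        simp [horth, mul_sum, mul_comm]

lemma sq_card_le_card_image_mul_sum_sq_card_fiber {α β : Type*} [DecidableEq β] [Fintype β]
    (s : Finset α) (f : α → β) :
    (#s : ℝ) ^ 2 ≤ #(s.image f) * ∑ t, (#{a ∈ s | f a = t} : ℝ) ^ 2 := by
  calc (#s : ℝ) ^ 2 = (∑ t ∈ s.image f, (#{a ∈ s | f a = t} : ℝ)) ^ 2 := by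
        rw [card_eq_sum_card_image f s]; push_cast; rfl
    _ ≤ #(s.image f) * ∑ t ∈ s.image f, (#{a ∈ s | f a = t} : ℝ) ^ 2 := sq_sum_le_card_mul_sum_sq
    _ ≤ #(s.image f) * ∑ t, (#{a ∈ s | f a = t} : ℝ) ^ 2 := by
        refine mul_le_mul_of_nonneg_left ?_ (Nat.cast_nonneg _)
        exact sum_le_univ_sum_of_nonneg fun t => sq_nonneg _

section Characters

variable {R : Type*} [CommRing R] [Fintype R] [DecidableEq R] {ψ : AddChar R ℂ}

lemma sum_apply_mul_mul_conj_apply_mul (hψ : ψ.IsPrimitive) (a b : R) :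
    ∑ u, ψ (u * a) * conj (ψ (u * b)) = if a = b then (Fintype.card R : ℂ) else 0 := by
  simp_rw [← map_neg_eq_conj, ← map_add_eq_mul, ← mul_neg, ← mul_add, ← sub_eq_add_neg,
    sum_mulShift _ hψ, sub_eq_zero, Nat.cast_ite, Nat.cast_zero]

variable {ι : Type*} [Fintype ι] [DecidableEq ι]

lemma sum_apply_dotProduct (hψ : ψ.IsPrimitive) (c : ι → R) :
    ∑ x : ι → R, ψ (x ⬝ᵥ c) = if c = 0 then (Fintype.card R : ℂ) ^ Fintype.card ι else 0 := by
  have hprod : ∀ x : ι → R, ψ (x ⬝ᵥ c) = ∏ i, ψ (x i * c i) := fun x =>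
    map_prod ψ.toMonoidHom (fun i => Multiplicative.ofAdd (x i * c i)) univ
  simp_rw [hprod]
  refine (Fintype.prod_sum fun i (r : R) => ψ (r * c i)).symm.trans ?_
  simp_rw [sum_mulShift _ hψ, Nat.cast_ite, Nat.cast_zero]
  rw [Fintype.prod_ite_zero, prod_const, card_univ]
  simp only [funext_iff, Pi.zero_apply]

lemma sum_apply_dotProduct_mul_conj (hψ : ψ.IsPrimitive) (a b : ι → R) :
    ∑ x : ι → R, ψ (x ⬝ᵥ a) * conj (ψ (x ⬝ᵥ b))
      = if a = b then (Fintype.card R : ℂ) ^ Fintype.card ι else 0 := by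
  simp_rw [← map_neg_eq_conj, ← map_add_eq_mul, ← dotProduct_neg, ← dotProduct_add,
    ← sub_eq_add_neg, sum_apply_dotProduct hψ, sub_eq_zero]

lemma sum_norm_sq_sum_apply_mul_eq {α : Type*} (hψ : ψ.IsPrimitive) (s : Finset α) (D : α → R) :
    ∑ u, ‖∑ p ∈ s, ψ (u * D p)‖ ^ 2 = Fintype.card R * ∑ t, (#{p ∈ s | D p = t} : ℝ) ^ 2 := by
  have hfiber : ∀ u, ∑ p ∈ s, ψ (u * D p) = ∑ t, (#{p ∈ s | D p = t} : ℂ) * ψ (u * t) := by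
    intro u
    rw [← sum_fiberwise s D]
    refine sum_congr rfl fun t _ => ?_
    rw [sum_congr rfl fun p hp => by rw [(mem_filter.1 hp).2], sum_const, nsmul_eq_mul]
  simp_rw [hfiber, sum_norm_sq_sum_mul_eq_of_orthogonal (fun u t => ψ (u * t)) _
    (sum_apply_mul_mul_conj_apply_mul hψ) univ, Complex.norm_natCast]

end Characters

section Distances

variable {R : Type*} [CommRing R] {ι : Type*} [Fintype ι]

def distSq (x y : ι → R) : R := ∑ i, (x i - y i) ^ 2

def distanceSet [DecidableEq R] (E : Finset (ι → R)) : Finset R :=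
  (E ×ˢ E).image fun xy => distSq xy.1 xy.2

lemma distSq_eq (x y : ι → R) : distSq x y = x ⬝ᵥ x + y ⬝ᵥ y - 2 * x ⬝ᵥ y := by
  simp only [distSq, dotProduct, mul_sum, ← sum_add_distrib, ← sum_sub_distrib]
  exact sum_congr rfl fun i _ => by ring

end Distances

section FiniteField

variable {F : Type*} [Field F] [Fintype F] [DecidableEq F] {ι : Type*} [Fintype ι] [DecidableEq ι]

lemma norm_sq_sum_sum_apply_mul_distSq_le {ψ : AddChar F ℂ} (hψ : ψ.IsPrimitive) (h2 : (2 : F) ≠ 0)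
    {u : F} (hu : u ≠ 0) (E : Finset (ι → F)) :
    ‖∑ x ∈ E, ∑ y ∈ E, ψ (u * distSq x y)‖ ^ 2
      ≤ (#E : ℝ) ^ 2 * Fintype.card F ^ Fintype.card ι := by
  set ψ' := ψ.mulShift (-(2 * u))
  have hψ' : ψ'.IsPrimitive := IsPrimitive.of_ne_one (hψ (neg_ne_zero.2 (mul_ne_zero h2 hu)))
  set G : (ι → F) → ℂ := fun x => ∑ y ∈ E, ψ (u * y ⬝ᵥ y) * ψ' (x ⬝ᵥ y)
  have hsplit : ∑ x ∈ E, ∑ y ∈ E, ψ (u * distSq x y) = ∑ x ∈ E, ψ (u * x ⬝ᵥ x) * G x := by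
    refine sum_congr rfl fun x _ => ?_
    rw [mul_sum]
    refine sum_congr rfl fun y _ => ?_
    rw [mulShift_apply, ← map_add_eq_mul, ← map_add_eq_mul, distSq_eq]
    ring_nf
  have hG : ∑ x, ‖G x‖ ^ 2 = Fintype.card F ^ Fintype.card ι * #E := by
    rw [sum_norm_sq_sum_mul_eq_of_orthogonal _ (Fintype.card F ^ Fintype.card ι)
      (fun a b => by simp [sum_apply_dotProduct_mul_conj hψ'])]
    simp [norm_apply]
  rw [hsplit]
  calc ‖∑ x ∈ E, ψ (u * x ⬝ᵥ x) * G x‖ ^ 2 ≤ (∑ x ∈ E, ‖G x‖) ^ 2 := by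
        gcongr
        refine (norm_sum_le _ _).trans_eq (sum_congr rfl fun x _ => ?_)
        rw [norm_mul, norm_apply, one_mul]
    _ ≤ #E * ∑ x ∈ E, ‖G x‖ ^ 2 := sq_sum_le_card_mul_sum_sq
    _ ≤ #E * ∑ x, ‖G x‖ ^ 2 :=
        mul_le_mul_of_nonneg_left (sum_le_univ_sum_of_nonneg fun x => sq_nonneg _)
          (Nat.cast_nonneg _)
    _ = (#E : ℝ) ^ 2 * Fintype.card F ^ Fintype.card ι := by rw [hG]; ring

lemma sum_norm_sq_sum_apply_mul_distSq_le {ψ : AddChar F ℂ} (hψ : ψ.IsPrimitive) (h2 : (2 : F) ≠ 0)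
    (E : Finset (ι → F)) :
    ∑ u, ‖∑ p ∈ E ×ˢ E, ψ (u * distSq p.1 p.2)‖ ^ 2
      ≤ (#E : ℝ) ^ 4 + Fintype.card F ^ (Fintype.card ι + 1) * #E ^ 2 := by
  rw [← add_sum_erase _ _ (mem_univ 0)]
  gcongr ?_ + ?_
  · exact le_of_eq (by simp [card_product]; ring)
  · calc ∑ u ∈ univ.erase 0, ‖∑ p ∈ E ×ˢ E, ψ (u * distSq p.1 p.2)‖ ^ 2
        ≤ ∑ u ∈ univ.erase (0 : F), (#E : ℝ) ^ 2 * Fintype.card F ^ Fintype.card ι :=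
          sum_le_sum fun u hu => by
            rw [sum_product]
            exact norm_sq_sum_sum_apply_mul_distSq_le hψ h2 (ne_of_mem_erase hu) E
      _ ≤ Fintype.card F * ((#E : ℝ) ^ 2 * Fintype.card F ^ Fintype.card ι) := by
          rw [sum_const, nsmul_eq_mul]
          gcongr
          exact_mod_cast (card_erase_le).trans_eq card_univ
      _ = Fintype.card F ^ (Fintype.card ι + 1) * #E ^ 2 := by ring

theorem card_mul_pow_four_le_card_distanceSet_mul (h2 : (2 : F) ≠ 0) (E : Finset (ι → F)) :
    (Fintype.card F : ℝ) * #E ^ 4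
      ≤ #(distanceSet E) * (#E ^ 4 + Fintype.card F ^ (Fintype.card ι + 1) * #E ^ 2) := by
  set ψ := FiniteField.primitiveChar_to_Complex F
  have hψ : ψ.IsPrimitive := FiniteField.primitiveChar_to_Complex_isPrimitive F
  have hCS := sq_card_le_card_image_mul_sum_sq_card_fiber (E ×ˢ E) fun p => distSq p.1 p.2
  have hPl := sum_norm_sq_sum_apply_mul_eq hψ (E ×ˢ E) fun p => distSq p.1 p.2
  rw [card_product, Nat.cast_mul, ← sq, ← pow_mul] at hCS
  calc (Fintype.card F : ℝ) * #E ^ 4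
      ≤ Fintype.card F * (#(distanceSet E) * ∑ t, (#{p ∈ E ×ˢ E | distSq p.1 p.2 = t} : ℝ) ^ 2) :=
        mul_le_mul_of_nonneg_left hCS (Nat.cast_nonneg _)
    _ = #(distanceSet E) * ∑ u, ‖∑ p ∈ E ×ˢ E, ψ (u * distSq p.1 p.2)‖ ^ 2 := by
        rw [hPl]; ring
    _ ≤ _ := mul_le_mul_of_nonneg_left (sum_norm_sq_sum_apply_mul_distSq_le hψ h2 E)
        (Nat.cast_nonneg _)

theorem le_card_distanceSet (hF : ringChar F ≠ 2) {E : Finset (ι → F)}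
    (hE : 4 * (Fintype.card F : ℝ) ^ (Fintype.card ι + 1) ≤ #E ^ 2) :
    4 / 5 * (Fintype.card F : ℝ) ≤ #(distanceSet E) := by
  have hmain := card_mul_pow_four_le_card_distanceSet_mul (Ring.two_ne_zero hF) E
  have hE0 : (0 : ℝ) < #E ^ 4 := by
    have : (0 : ℝ) < 4 * (Fintype.card F : ℝ) ^ (Fintype.card ι + 1) := by positivity
    nlinarith
  have : (Fintype.card F : ℝ) * #E ^ 4 ≤ #(distanceSet E) * (5 / 4 * #E ^ 4) := by
    refine hmain.trans (mul_le_mul_of_nonneg_left ?_ (Nat.cast_nonneg _))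
    nlinarith
  nlinarith

end FiniteField

/-- Finite-field Falconer theorem: if `#E ≳ q^{(d+1)/2}`, the distance set has size `≳ q`. -/
theorem stmt_18 :
    ∃ C c : ℝ, 0 < C ∧ 0 < c ∧ ∀ (q : ℕ) [Fact q.Prime], Odd q → ∀ (d : ℕ), 2 ≤ d →
      ∀ E : Finset (Fin d → ZMod q),
        C * (q : ℝ) ^ (((d : ℝ) + 1) / 2) ≤ (E.card : ℝ) →
        c * (q : ℝ) ≤
          (((E ×ˢ E).image fun xy => ∑ i, (xy.1 i - xy.2 i) ^ 2).card : ℝ) := by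
  refine ⟨2, 4 / 5, by norm_num, by norm_num, fun q _ hodd d _ E hE => ?_⟩
  have hq : ringChar (ZMod q) ≠ 2 := by
    rw [ZMod.ringChar_zmod_n]
    rintro rfl
    exact absurd hodd (by decide)
  have hsq : 4 * (q : ℝ) ^ (d + 1) ≤ #E ^ 2 := by
    have hpow : ((q : ℝ) ^ (((d : ℝ) + 1) / 2)) ^ 2 = (q : ℝ) ^ (d + 1) := by
      rw [← Real.rpow_mul_natCast (Nat.cast_nonneg q), ← Real.rpow_natCast]
      push_cast
      congr 1
      ring
    have := pow_le_pow_left₀ (by positivity) hE 2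
    rw [mul_pow, hpow] at this
    linarith
  have h := le_card_distanceSet hq (ι := Fin d) (by simpa [ZMod.card] using hsq)
  rw [ZMod.card] at h
  exact h
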